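/- For every propositional formula θ over P (a formula built from atoms in P using only ¬ and ∧), the PPLTL formula H(θ → WY(H(¬θ))) is equivalent to the LTLf formula G(θ → WX(G(¬θ))): for every finite nonempty trace τ over P, τ ⊨ H(θ → WY(H(¬θ))) if and only if τ ⊨ G(θ → WX(G(¬θ))). -/

import Mathlib

inductive PPLTL (P : Type) : Type
  | atom : P → PPLTL P
  | neg : PPLTL P → PPLTL P
  | conj : PPLTL P → PPLTL P → PPLTL P
  | yesterday : PPLTL P → PPLTL P
  | since : PPLTL P → PPLTL P → PPLTL P

namespace PPLTL

variable {P : Type}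

/-- Satisfaction of a pure-past LTL formula on the trace `τ` at instant `i`
(for a trace `s₀ ⋯ sₙ`, satisfaction at `i ≤ n` only depends on `s₀, …, sᵢ`). -/
def Sat (τ : ℕ → Set P) : PPLTL P → ℕ → Prop
  | atom p, i => p ∈ τ i
  | neg φ, i => ¬ Sat τ φ i
  | conj φ ψ, i => Sat τ φ i ∧ Sat τ ψ i
  | yesterday φ, i => 1 ≤ i ∧ Sat τ φ (i - 1)
  | since φ ψ, i => ∃ k, k ≤ i ∧ Sat τ ψ k ∧ ∀ j, k < j → j ≤ i → Sat τ φ j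

/-- Disjunction: `φ ∨ ψ ≡ ¬(¬φ ∧ ¬ψ)`. -/
def por (φ ψ : PPLTL P) : PPLTL P := neg (conj (neg φ) (neg ψ))

/-- Implication: `φ → ψ ≡ ¬φ ∨ ψ`. -/
def pimp (φ ψ : PPLTL P) : PPLTL P := por (neg φ) ψ

/-- `true ≡ p ∨ ¬p`. -/
def ptrue (p : P) : PPLTL P := por (atom p) (neg (atom p))

/-- Once: `O φ ≡ true S φ`. -/
def ponce (p : P) (φ : PPLTL P) : PPLTL P := since (ptrue p) φ

/-- Historically: `H φ ≡ ¬O¬φ`. -/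
def phist (p : P) (φ : PPLTL P) : PPLTL P := neg (ponce p (neg φ))

/-- Weak yesterday: `WY φ ≡ ¬Y¬φ`. -/
def pwy (φ : PPLTL P) : PPLTL P := neg (yesterday (neg φ))

/-- Start: `start ≡ ¬Y true`. -/
def pstart (p : P) : PPLTL P := neg (yesterday (ptrue p))

end PPLTL

inductive LTLf (P : Type) : Type
  | atom : P → LTLf P
  | neg : LTLf P → LTLf P
  | conj : LTLf P → LTLf P → LTLf P
  | next : LTLf P → LTLf P
  | until_ : LTLf P → LTLf P → LTLf P

namespace LTLf

variable {P : Type}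

/-- Satisfaction of an LTLf formula at instant `i` on the finite trace
`s₀ ⋯ sₙ` given by `τ` and the last index `n`. -/
def Sat (τ : ℕ → Set P) (n : ℕ) : LTLf P → ℕ → Prop
  | atom p, i => p ∈ τ i
  | neg ψ, i => ¬ Sat τ n ψ i
  | conj ψ₁ ψ₂, i => Sat τ n ψ₁ i ∧ Sat τ n ψ₂ i
  | next ψ, i => i < n ∧ Sat τ n ψ (i + 1)
  | until_ ψ₁ ψ₂, i =>
      ∃ k, i ≤ k ∧ k ≤ n ∧ Sat τ n ψ₂ k ∧ ∀ j, i ≤ j → j < k → Sat τ n ψ₁ j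

/-- Disjunction: `ψ₁ ∨ ψ₂ ≡ ¬(¬ψ₁ ∧ ¬ψ₂)`. -/
def lor (ψ₁ ψ₂ : LTLf P) : LTLf P := neg (conj (neg ψ₁) (neg ψ₂))

/-- Implication: `ψ₁ → ψ₂ ≡ ¬ψ₁ ∨ ψ₂`. -/
def limp (ψ₁ ψ₂ : LTLf P) : LTLf P := lor (neg ψ₁) ψ₂

/-- Biconditional. -/
def liff (ψ₁ ψ₂ : LTLf P) : LTLf P := conj (limp ψ₁ ψ₂) (limp ψ₂ ψ₁)

/-- `true ≡ p ∨ ¬p`. -/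
def ltrue (p : P) : LTLf P := lor (atom p) (neg (atom p))

/-- Eventually: `F ψ ≡ true U ψ`. -/
def ev (p : P) (ψ : LTLf P) : LTLf P := until_ (ltrue p) ψ

/-- Always: `G ψ ≡ ¬F¬ψ`. -/
def alw (p : P) (ψ : LTLf P) : LTLf P := neg (ev p (neg ψ))

/-- Weak next: `WX ψ ≡ ¬X¬ψ`. -/
def wnext (ψ : LTLf P) : LTLf P := neg (next (neg ψ))

/-- Release: `ψ₁ R ψ₂ ≡ ¬(¬ψ₁ U ¬ψ₂)`. -/
def release (ψ₁ ψ₂ : LTLf P) : LTLf P := neg (until_ (neg ψ₁) (neg ψ₂))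

/-- End of the trace: `end ≡ ¬X true`. -/
def lend (p : P) : LTLf P := neg (next (ltrue p))

end LTLf

/-- Propositional formulas over `P`, built from atoms using only ¬ and ∧. -/
inductive PropForm (P : Type) : Type
  | atom : P → PropForm P
  | neg : PropForm P → PropForm P
  | conj : PropForm P → PropForm P → PropForm P

namespace PropForm

variable {P : Type}

/-- Some atom occurring in a propositional formula (used to express the
abbreviation `true ≡ p ∨ ¬p`). -/
def someAtom : PropForm P → P
  | atom p => p
  | neg θ => someAtom θ
  | conj θ _ => someAtom θ

/-- A propositional formula read as a PPLTL formula. -/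
def toPPLTL : PropForm P → PPLTL P
  | atom p => PPLTL.atom p
  | neg θ => PPLTL.neg θ.toPPLTL
  | conj θ₁ θ₂ => PPLTL.conj θ₁.toPPLTL θ₂.toPPLTL

/-- A propositional formula read as an LTLf formula. -/
def toLTLf : PropForm P → LTLf P
  | atom p => LTLf.atom p
  | neg θ => LTLf.neg θ.toLTLf
  | conj θ₁ θ₂ => LTLf.conj θ₁.toLTLf θ₂.toLTLf

end PropForm

/-!
Both formulas say that θ holds at most once on the trace: the past formula forbids, at each
occurrence of θ, an earlier one, and the future formula forbids a later one.
-/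

namespace PropForm

variable {P : Type}

def Holds (s : Set P) : PropForm P → Prop
  | atom p => p ∈ s
  | neg θ => ¬ θ.Holds s
  | conj θ₁ θ₂ => θ₁.Holds s ∧ θ₂.Holds s

theorem sat_toPPLTL (θ : PropForm P) (τ : ℕ → Set P) (i : ℕ) :
    PPLTL.Sat τ θ.toPPLTL i ↔ θ.Holds (τ i) := by
  induction θ with
  | atom p => rfl
  | neg θ ih => exact not_congr ih
  | conj θ₁ θ₂ ih₁ ih₂ => exact and_congr ih₁ ih₂

theorem sat_toLTLf (θ : PropForm P) (τ : ℕ → Set P) (n i : ℕ) :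
    LTLf.Sat τ n θ.toLTLf i ↔ θ.Holds (τ i) := by
  induction θ with
  | atom p => rfl
  | neg θ ih => exact not_congr ih
  | conj θ₁ θ₂ ih₁ ih₂ => exact and_congr ih₁ ih₂

end PropForm

namespace PPLTL

variable {P : Type} (τ : ℕ → Set P)

theorem sat_neg (φ : PPLTL P) (i : ℕ) : Sat τ (neg φ) i ↔ ¬ Sat τ φ i := Iff.rfl

theorem sat_ptrue (p : P) (i : ℕ) : Sat τ (ptrue p) i := by
  simp [ptrue, por, Sat]

theorem sat_pimp (φ ψ : PPLTL P) (i : ℕ) :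
    Sat τ (pimp φ ψ) i ↔ (Sat τ φ i → Sat τ ψ i) := by
  simp [pimp, por, Sat, imp_iff_not_or]

theorem sat_pwy (φ : PPLTL P) (i : ℕ) :
    Sat τ (pwy φ) i ↔ (1 ≤ i → Sat τ φ (i - 1)) := by
  simp [pwy, Sat]

theorem sat_phist (p : P) (φ : PPLTL P) (i : ℕ) :
    Sat τ (phist p φ) i ↔ ∀ k ≤ i, Sat τ φ k := by
  simp only [phist, ponce, Sat]
  constructor
  · intro h k hk
    by_contra hφ
    exact h ⟨k, hk, hφ, fun j _ _ => sat_ptrue τ p j⟩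
  · rintro h ⟨k, hk, hφ, -⟩
    exact hφ (h k hk)

end PPLTL

namespace LTLf

variable {P : Type} (τ : ℕ → Set P) (n : ℕ)

theorem sat_neg (ψ : LTLf P) (i : ℕ) : Sat τ n (neg ψ) i ↔ ¬ Sat τ n ψ i := Iff.rfl

theorem sat_ltrue (p : P) (i : ℕ) : Sat τ n (ltrue p) i := by
  simp [ltrue, lor, Sat]

theorem sat_limp (ψ₁ ψ₂ : LTLf P) (i : ℕ) :
    Sat τ n (limp ψ₁ ψ₂) i ↔ (Sat τ n ψ₁ i → Sat τ n ψ₂ i) := by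
  simp [limp, lor, Sat, imp_iff_not_or]

theorem sat_wnext (ψ : LTLf P) (i : ℕ) :
    Sat τ n (wnext ψ) i ↔ (i < n → Sat τ n ψ (i + 1)) := by
  simp [wnext, Sat]

theorem sat_alw (p : P) (ψ : LTLf P) (i : ℕ) :
    Sat τ n (alw p ψ) i ↔ ∀ k, i ≤ k → k ≤ n → Sat τ n ψ k := by
  simp only [alw, ev, Sat]
  constructor
  · intro h k hik hkn
    by_contra hψ
    exact h ⟨k, hik, hkn, hψ, fun j _ _ => sat_ltrue τ n p j⟩
  · rintro h ⟨k, hik, hkn, hψ, -⟩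
    exact hψ (h k hik hkn)

end LTLf

def AtMostOnceUpTo (E : ℕ → Prop) (n : ℕ) : Prop :=
  ∀ i j, i < j → j ≤ n → E i → ¬ E j

theorem atMostOnceUpTo_iff_past (E : ℕ → Prop) (n : ℕ) :
    AtMostOnceUpTo E n ↔ ∀ j ≤ n, E j → 1 ≤ j → ∀ i ≤ j - 1, ¬ E i := by
  constructor
  · intro h j hj hEj _ i hi hEi
    exact h i j (by omega) hj hEi hEj
  · intro h i j hij hj hEi
    exact fun hEj => h j hj hEj (by omega) i (by omega) hEi

theorem atMostOnceUpTo_iff_future (E : ℕ → Prop) (n : ℕ) :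
    AtMostOnceUpTo E n ↔ ∀ i ≤ n, E i → i < n → ∀ j, i + 1 ≤ j → j ≤ n → ¬ E j := by
  constructor
  · intro h i _ hEi _ j hij hj
    exact h i j (by omega) hj hEi
  · intro h i j hij hj hEi
    exact h i (by omega) hEi (by omega) j hij hj

open PPLTL LTLf in
/-- For every propositional formula θ, the PPLTL formula
`H(θ → WY(H(¬θ)))` is equivalent to the LTLf formula `G(θ → WX(G(¬θ)))`. -/
theorem at_most_once_equiv {P : Type} (θ : PropForm P) (τ : ℕ → Set P) (n : ℕ) :
    PPLTL.Sat τ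
        (phist θ.someAtom
          (pimp θ.toPPLTL (pwy (phist θ.someAtom (.neg θ.toPPLTL))))) n ↔
      LTLf.Sat τ n
        (alw θ.someAtom
          (limp θ.toLTLf (wnext (alw θ.someAtom (.neg θ.toLTLf))))) 0 := by
  simp only [PPLTL.sat_phist, PPLTL.sat_pimp, PPLTL.sat_pwy, PPLTL.sat_neg,
    LTLf.sat_alw, LTLf.sat_limp, LTLf.sat_wnext, LTLf.sat_neg,
    PropForm.sat_toPPLTL, PropForm.sat_toLTLf, zero_le, true_imp_iff]
  rw [← atMostOnceUpTo_iff_past, ← atMostOnceUpTo_iff_future]
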